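/- Let k : ℝ² → ℝ be smooth. Then k satisfies ∂⁴k/∂x₁⁴ = 0, ∂⁴k/∂x₂⁴ = 0, ∂⁴k/∂x₁³∂x₂ = 0, ∂⁴k/∂x₁∂x₂³ = 0, and ∂⁴k/∂x₁²∂x₂² = 0 identically on ℝ² if and only if there exist polynomial functions f₁, f₃ : ℝ → ℝ of degree at most 3 and polynomial functions f₂, f₄ : ℝ → ℝ of degree at most 2 such that k(x₁,x₂) = f₁(x₁) + x₂ f₂(x₁) + f₃(x₂) + x₁ f₄(x₂) for all (x₁,x₂) ∈ ℝ². (This is the form of the in-plane fields k₁, k₂ in the universal displacements of the ∞-gonal strain-gradient classes 𝕊𝕆(2) and 𝕆⁻(2) and of the pentagonal class ℤ₅.) -/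

import Mathlib

/-- Partial derivative of a scalar field on `ℝ²` in the `j`-th coordinate direction. -/
noncomputable def pd2 (j : Fin 2) (f : (Fin 2 → ℝ) → ℝ) : (Fin 2 → ℝ) → ℝ :=
  fun x => fderiv ℝ f x (Pi.single j 1)

/-- A polynomial function of degree at most 3. -/
def IsPolyDeg3 (p : ℝ → ℝ) : Prop :=
  ∃ a₀ a₁ a₂ a₃ : ℝ, ∀ t, p t = a₀ + a₁ * t + a₂ * t ^ 2 + a₃ * t ^ 3

/-- A polynomial function of degree at most 2. -/
def IsPolyDeg2 (p : ℝ → ℝ) : Prop :=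
  ∃ a₀ a₁ a₂ : ℝ, ∀ t, p t = a₀ + a₁ * t + a₂ * t ^ 2


theorem pd2_eval {f : (Fin 2 → ℝ) → ℝ} {L : (Fin 2 → ℝ) →L[ℝ] ℝ} {x : Fin 2 → ℝ}
    (h : HasFDerivAt f L x) (j : Fin 2) : pd2 j f x = L (Pi.single j 1) := by
  rw [pd2, h.fderiv]

theorem pd2_contDiff {g : (Fin 2 → ℝ) → ℝ} (hg : ContDiff ℝ (⊤ : ℕ∞) g) (j : Fin 2) :
    ContDiff ℝ (⊤ : ℕ∞) (pd2 j g) :=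
  (ContinuousLinearMap.apply ℝ ℝ (Pi.single j (1:ℝ) : Fin 2 → ℝ)).contDiff.comp
    (contDiff_infty_iff_fderiv.1 hg).2

theorem pd2_diff {g : (Fin 2 → ℝ) → ℝ} (hg : ContDiff ℝ (⊤ : ℕ∞) g) :
    Differentiable ℝ g := (contDiff_infty_iff_fderiv.1 hg).1

theorem pd2_swap {g : (Fin 2 → ℝ) → ℝ} (hg : ContDiff ℝ (⊤ : ℕ∞) g) (i j : Fin 2) :
    pd2 i (pd2 j g) = pd2 j (pd2 i g) := by
  funext x
  have hdg : Differentiable ℝ g := (contDiff_infty_iff_fderiv.1 hg).1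
  have hdfg : Differentiable ℝ (fderiv ℝ g) :=
    (contDiff_infty_iff_fderiv.1 (contDiff_infty_iff_fderiv.1 hg).2).1
  have key := second_derivative_symmetric (f := g) (f' := fderiv ℝ g)
    (f'' := fderiv ℝ (fderiv ℝ g) x) (fun y => (hdg y).hasFDerivAt) ((hdfg x).hasFDerivAt)
  have ev : ∀ a b : Fin 2, pd2 a (pd2 b g) x
      = fderiv ℝ (fderiv ℝ g) x (Pi.single a 1) (Pi.single b 1) := by
    intro a b
    have H : HasFDerivAt (pd2 b g)
        ((ContinuousLinearMap.apply ℝ ℝ (Pi.single b (1:ℝ) : Fin 2 → ℝ)).comp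
          (fderiv ℝ (fderiv ℝ g) x)) x :=
      (ContinuousLinearMap.apply ℝ ℝ (Pi.single b (1:ℝ) : Fin 2 → ℝ)).hasFDerivAt.comp x
        ((hdfg x).hasFDerivAt)
    rw [pd2_eval H a]
    rfl
  rw [ev i j, ev j i, key]

def cub (a b c d e f g h i j : ℝ) : (Fin 2 → ℝ) → ℝ := fun x =>
  a + b * x 0 + c * x 1 + d * (x 0 * x 0) + e * (x 0 * x 1) + f * (x 1 * x 1)
  + g * (x 0 * x 0 * x 0) + h * (x 0 * x 0 * x 1) + i * (x 0 * x 1 * x 1)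
  + j * (x 1 * x 1 * x 1)

noncomputable def dcub (a b c d e f g h i j : ℝ) (x : Fin 2 → ℝ) : (Fin 2 → ℝ) →L[ℝ] ℝ :=
  (b + 2*d*x 0 + e*x 1 + 3*g*(x 0*x 0) + 2*h*(x 0*x 1) + i*(x 1*x 1)) •
    (ContinuousLinearMap.proj 0 : ((i : Fin 2) → ℝ) →L[ℝ] ℝ)
  + (c + e*x 0 + 2*f*x 1 + h*(x 0*x 0) + 2*i*(x 0*x 1) + 3*j*(x 1*x 1)) •
    (ContinuousLinearMap.proj 1 : ((i : Fin 2) → ℝ) →L[ℝ] ℝ)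

theorem cub_hasFDerivAt (a b c d e f g h i j : ℝ) (x : Fin 2 → ℝ) :
    HasFDerivAt (cub a b c d e f g h i j) (dcub a b c d e f g h i j x) x := by
  have hx0 : HasFDerivAt (fun v : Fin 2 → ℝ => v 0)
      (ContinuousLinearMap.proj 0 : ((i : Fin 2) → ℝ) →L[ℝ] ℝ) x :=
    (ContinuousLinearMap.proj 0 : ((i : Fin 2) → ℝ) →L[ℝ] ℝ).hasFDerivAt
  have hx1 : HasFDerivAt (fun v : Fin 2 → ℝ => v 1)
      (ContinuousLinearMap.proj 1 : ((i : Fin 2) → ℝ) →L[ℝ] ℝ) x :=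
    (ContinuousLinearMap.proj 1 : ((i : Fin 2) → ℝ) →L[ℝ] ℝ).hasFDerivAt
  have H := (((((((((hasFDerivAt_const a x).add (hx0.const_mul b)).add
    (hx1.const_mul c)).add ((hx0.mul hx0).const_mul d)).add
    ((hx0.mul hx1).const_mul e)).add ((hx1.mul hx1).const_mul f)).add
    (((hx0.mul hx0).mul hx0).const_mul g)).add
    (((hx0.mul hx0).mul hx1).const_mul h)).add
    (((hx0.mul hx1).mul hx1).const_mul i)).add
    (((hx1.mul hx1).mul hx1).const_mul j)
  refine H.congr_fderiv ?_
  refine ContinuousLinearMap.ext fun v => ?_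
  simp [dcub, ContinuousLinearMap.smul_apply]
  ring

theorem cub_differentiable (a b c d e f g h i j : ℝ) :
    Differentiable ℝ (cub a b c d e f g h i j) :=
  fun x => (cub_hasFDerivAt a b c d e f g h i j x).differentiableAt

theorem pd2_cub0 (a b c d e f g h i j : ℝ) :
    pd2 0 (cub a b c d e f g h i j) = cub b (2*d) e (3*g) (2*h) i 0 0 0 0 := by
  funext x
  rw [pd2_eval (cub_hasFDerivAt a b c d e f g h i j x) 0]
  simp [dcub, cub, Pi.single_apply]

theorem pd2_cub1 (a b c d e f g h i j : ℝ) :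
    pd2 1 (cub a b c d e f g h i j) = cub c e (2*f) h (2*i) (3*j) 0 0 0 0 := by
  funext x
  rw [pd2_eval (cub_hasFDerivAt a b c d e f g h i j x) 1]
  simp [dcub, cub, Pi.single_apply]

theorem pd2_sub {f g : (Fin 2 → ℝ) → ℝ} (hf : Differentiable ℝ f)
    (hg : Differentiable ℝ g) (j : Fin 2) (x : Fin 2 → ℝ) :
    pd2 j (fun y => f y - g y) x = pd2 j f x - pd2 j g x := by
  simp only [pd2, fderiv_fun_sub (hf x) (hg x), ContinuousLinearMap.sub_apply]

theorem eq_const {g : (Fin 2 → ℝ) → ℝ} (hg : Differentiable ℝ g)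
    (h0 : ∀ x, pd2 0 g x = 0) (h1 : ∀ x, pd2 1 g x = 0) (x : Fin 2 → ℝ) : g x = g 0 := by
  apply is_const_of_fderiv_eq_zero hg
  intro y
  refine ContinuousLinearMap.ext fun v => ?_
  have hv : v = v 0 • (Pi.single 0 (1:ℝ) : Fin 2 → ℝ) + v 1 • (Pi.single 1 (1:ℝ) : Fin 2 → ℝ) := by
    funext i; fin_cases i <;> simp
  have e0 := h0 y; have e1 := h1 y
  simp only [pd2] at e0 e1
  rw [hv]
  simp [e0, e1]

theorem eq_of_pd2 {g P : (Fin 2 → ℝ) → ℝ} (hg : Differentiable ℝ g)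
    (hP : Differentiable ℝ P) (h0 : ∀ x, pd2 0 g x = pd2 0 P x)
    (h1 : ∀ x, pd2 1 g x = pd2 1 P x) (h00 : g 0 = P 0) (x : Fin 2 → ℝ) : g x = P x := by
  have key : ∀ y, (fun y => g y - P y) y = (fun y => g y - P y) 0 := by
    refine eq_const (hg.sub hP) ?_ ?_
    · intro y; rw [pd2_sub hg hP 0 y, h0 y, sub_self]
    · intro y; rw [pd2_sub hg hP 1 y, h1 y, sub_self]
  have := key x
  simp only [h00, sub_self] at this
  linarith [this]

/-- A smooth function `k : ℝ² → ℝ` has all five fourth-order partial derivatives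
`∂⁴k/∂x₁⁴`, `∂⁴k/∂x₂⁴`, `∂⁴k/∂x₁³∂x₂`, `∂⁴k/∂x₁∂x₂³`, `∂⁴k/∂x₁²∂x₂²` vanishing
identically if and only if `k = f₁(x₁) + x₂f₂(x₁) + f₃(x₂) + x₁f₄(x₂)` with `f₁, f₃`
polynomials of degree ≤ 3 and `f₂, f₄` polynomials of degree ≤ 2. -/
theorem k_fields_form
    (k : (Fin 2 → ℝ) → ℝ) (hk : ContDiff ℝ (⊤ : ℕ∞) k) :
    ((∀ p, pd2 0 (pd2 0 (pd2 0 (pd2 0 k))) p = 0) ∧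
     (∀ p, pd2 1 (pd2 1 (pd2 1 (pd2 1 k))) p = 0) ∧
     (∀ p, pd2 0 (pd2 0 (pd2 0 (pd2 1 k))) p = 0) ∧
     (∀ p, pd2 0 (pd2 1 (pd2 1 (pd2 1 k))) p = 0) ∧
     (∀ p, pd2 0 (pd2 0 (pd2 1 (pd2 1 k))) p = 0)) ↔
    ∃ f₁ f₂ f₃ f₄ : ℝ → ℝ,
      IsPolyDeg3 f₁ ∧ IsPolyDeg2 f₂ ∧ IsPolyDeg3 f₃ ∧ IsPolyDeg2 f₄ ∧
      ∀ pt : Fin 2 → ℝ, k pt = f₁ (pt 0) + pt 1 * f₂ (pt 0) + f₃ (pt 1)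
        + pt 0 * f₄ (pt 1) := by
  constructor
  · rintro ⟨H1, H2, H3, H4, H5⟩
    -- smoothness ladder
    have c1a := pd2_contDiff hk 0
    have c1b := pd2_contDiff hk 1
    have c2a := pd2_contDiff c1a 0
    have c2b := pd2_contDiff c1b 0
    have c2c := pd2_contDiff c1b 1
    have c3a := pd2_contDiff c2a 0
    have c3b := pd2_contDiff c2b 0
    have c3c := pd2_contDiff c2c 0
    have c3d := pd2_contDiff c2c 1
    -- swaps
    have w1 : pd2 1 (pd2 0 k) = pd2 0 (pd2 1 k) := pd2_swap hk 1 0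
    have w2 : pd2 1 (pd2 0 (pd2 0 k)) = pd2 0 (pd2 0 (pd2 1 k)) := by
      rw [pd2_swap c1a 1 0, w1]
    have w3 : pd2 1 (pd2 0 (pd2 1 k)) = pd2 0 (pd2 1 (pd2 1 k)) := pd2_swap c1b 1 0
    have w4 : pd2 1 (pd2 0 (pd2 0 (pd2 1 k))) = pd2 0 (pd2 0 (pd2 1 (pd2 1 k))) := by
      rw [pd2_swap c2b 1 0, w3]
    have w5 : pd2 1 (pd2 0 (pd2 1 (pd2 1 k))) = pd2 0 (pd2 1 (pd2 1 (pd2 1 k))) :=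
      pd2_swap c2c 1 0
    have w6 : pd2 1 (pd2 0 (pd2 0 (pd2 0 k))) = pd2 0 (pd2 0 (pd2 0 (pd2 1 k))) := by
      rw [pd2_swap c2a 1 0, w2]
    -- stage 3: third partials are constant
    obtain ⟨A3, hU3⟩ : ∃ A, ∀ x, pd2 0 (pd2 0 (pd2 0 k)) x = A :=
      ⟨_, eq_const (pd2_diff c3a) H1 (fun x => by rw [w6]; exact H3 x)⟩
    obtain ⟨A2, hU2⟩ : ∃ A, ∀ x, pd2 0 (pd2 0 (pd2 1 k)) x = A :=
      ⟨_, eq_const (pd2_diff c3b) H3 (fun x => by rw [w4]; exact H5 x)⟩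
    obtain ⟨A1, hU1⟩ : ∃ A, ∀ x, pd2 0 (pd2 1 (pd2 1 k)) x = A :=
      ⟨_, eq_const (pd2_diff c3c) H5 (fun x => by rw [w5]; exact H4 x)⟩
    obtain ⟨A0, hU0⟩ : ∃ A, ∀ x, pd2 1 (pd2 1 (pd2 1 k)) x = A :=
      ⟨_, eq_const (pd2_diff c3d) H4 H2⟩
    -- stage 2: second partials are affine
    obtain ⟨B20, hS20⟩ : ∃ B, ∀ x, pd2 0 (pd2 0 k) x = cub B A3 A2 0 0 0 0 0 0 0 x := by
      refine ⟨pd2 0 (pd2 0 k) 0, eq_of_pd2 (pd2_diff c2a) (cub_differentiable _ _ _ _ _ _ _ _ _ _)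
        ?_ ?_ (by simp [cub]) ⟩
      · intro x; rw [pd2_cub0, hU3 x]; simp [cub]
      · intro x; rw [w2, pd2_cub1, hU2 x]; simp [cub]
    obtain ⟨B11, hS11⟩ : ∃ B, ∀ x, pd2 0 (pd2 1 k) x = cub B A2 A1 0 0 0 0 0 0 0 x := by
      refine ⟨pd2 0 (pd2 1 k) 0, eq_of_pd2 (pd2_diff c2b) (cub_differentiable _ _ _ _ _ _ _ _ _ _)
        ?_ ?_ (by simp [cub]) ⟩
      · intro x; rw [pd2_cub0, hU2 x]; simp [cub]
      · intro x; rw [w3, pd2_cub1, hU1 x]; simp [cub]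
    obtain ⟨B02, hS02⟩ : ∃ B, ∀ x, pd2 1 (pd2 1 k) x = cub B A1 A0 0 0 0 0 0 0 0 x := by
      refine ⟨pd2 1 (pd2 1 k) 0, eq_of_pd2 (pd2_diff c2c) (cub_differentiable _ _ _ _ _ _ _ _ _ _)
        ?_ ?_ (by simp [cub]) ⟩
      · intro x; rw [pd2_cub0, hU1 x]; simp [cub]
      · intro x; rw [pd2_cub1, hU0 x]; simp [cub]
    -- stage 1: first partials are quadratic
    obtain ⟨C1, hR1⟩ : ∃ C, ∀ x, pd2 0 k x
        = cub C B20 B11 (A3/2) A2 (A1/2) 0 0 0 0 x := by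
      refine ⟨pd2 0 k 0, eq_of_pd2 (pd2_diff c1a) (cub_differentiable _ _ _ _ _ _ _ _ _ _)
        ?_ ?_ (by simp [cub]) ⟩
      · intro x; rw [pd2_cub0, hS20 x]; simp only [cub]; ring
      · intro x; rw [w1, pd2_cub1, hS11 x]; simp only [cub]; ring
    obtain ⟨C0, hR0⟩ : ∃ C, ∀ x, pd2 1 k x
        = cub C B11 B02 (A2/2) A1 (A0/2) 0 0 0 0 x := by
      refine ⟨pd2 1 k 0, eq_of_pd2 (pd2_diff c1b) (cub_differentiable _ _ _ _ _ _ _ _ _ _)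
        ?_ ?_ (by simp [cub]) ⟩
      · intro x; rw [pd2_cub0, hS11 x]; simp only [cub]; ring
      · intro x; rw [pd2_cub1, hS02 x]; simp only [cub]; ring
    -- stage 0: k itself is the cubic
    obtain ⟨K, hkP⟩ : ∃ K, ∀ x, k x
        = cub K C1 C0 (B20/2) B11 (B02/2) (A3/6) (A2/2) (A1/2) (A0/6) x := by
      refine ⟨k 0, eq_of_pd2 (pd2_diff hk) (cub_differentiable _ _ _ _ _ _ _ _ _ _)
        ?_ ?_ (by simp [cub]) ⟩
      · intro x; rw [pd2_cub0, hR1 x]; simp only [cub]; ring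
      · intro x; rw [pd2_cub1, hR0 x]; simp only [cub]; ring
    refine ⟨fun t => K + C1 * t + B20/2 * t ^ 2 + A3/6 * t ^ 3,
      fun t => C0 + B11 * t + A2/2 * t ^ 2,
      fun t => 0 + 0 * t + B02/2 * t ^ 2 + A0/6 * t ^ 3,
      fun t => 0 + 0 * t + A1/2 * t ^ 2,
      ⟨K, C1, B20/2, A3/6, fun t => rfl⟩,
      ⟨C0, B11, A2/2, fun t => rfl⟩,
      ⟨0, 0, B02/2, A0/6, fun t => rfl⟩,
      ⟨0, 0, A1/2, fun t => rfl⟩, ?_⟩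
    intro pt
    rw [hkP pt]
    simp only [cub]
    ring
  · rintro ⟨f₁, f₂, f₃, f₄, ⟨p0, p1, p2, p3, hp⟩, ⟨q0, q1, q2, hq⟩,
      ⟨r0, r1, r2, r3, hr⟩, ⟨s0, s1, s2, hs⟩, hform⟩
    have hkc : k = cub (p0+r0) (p1+s0) (q0+r1) p2 (q1+s1) r2 p3 q2 s2 r3 := by
      funext x
      rw [hform x, hp, hq, hr, hs]
      simp only [cub]
      ring
    refine ⟨?_, ?_, ?_, ?_, ?_⟩ <;> intro p
    · rw [hkc, pd2_cub0, pd2_cub0, pd2_cub0, pd2_cub0]; simp [cub]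
    · rw [hkc, pd2_cub1, pd2_cub1, pd2_cub1, pd2_cub1]; simp [cub]
    · rw [hkc, pd2_cub1, pd2_cub0, pd2_cub0, pd2_cub0]; simp [cub]
    · rw [hkc, pd2_cub1, pd2_cub1, pd2_cub1, pd2_cub0]; simp [cub]
    · rw [hkc, pd2_cub1, pd2_cub1, pd2_cub0, pd2_cub0]; simp [cub]
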